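/- The function β(y) = √(2/π)((32/9)y⁶ - (31/3)y⁴ + (15/2)y² - 37/48) e^{-2y²} satisfies the differential equation 0 = d/dy(y β(y)) + (1/4) β''(y) + √(2/π)((64/3)y⁶ - 68y⁴ + 46y² - 15/4) e^{-2y²}, and ∫_ℝ β(y) dy = 0. -/

import Mathlib

open Real

noncomputable def β : ℝ → ℝ := fun y =>
  Real.sqrt (2 / π) * ((32 / 9) * y ^ 6 - (31 / 3) * y ^ 4 + (15 / 2) * y ^ 2 - 37 / 48) *
    Real.exp (-2 * y ^ 2)

/-!
Functions of the form `p(y) e^{-a y²}` with `p` a polynomial are closed under differentiation,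
which acts on `p` as `p ↦ p' - 2 a y p`. The differential equation is therefore a polynomial
identity. For the integral, `β` is the derivative of `q(y) e^{-2y²}` with
`q = √(2/π) (-(8/9) y⁵ + (53/36) y³ - (37/48) y)`, which vanishes at `±∞`.
-/

open Polynomial Filter Topology MeasureTheory

noncomputable def gaussMul (a : ℝ) (p : ℝ[X]) (x : ℝ) : ℝ := p.eval x * exp (-a * x ^ 2)

noncomputable def gaussDerivative (a : ℝ) (p : ℝ[X]) : ℝ[X] :=
  derivative p - C (2 * a) * X * p

section GaussMul

variable (a : ℝ) (p : ℝ[X])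

theorem hasDerivAt_gaussMul (x : ℝ) :
    HasDerivAt (gaussMul a p) (gaussMul a (gaussDerivative a p) x) x := by
  refine ((p.hasDerivAt x).fun_mul ((hasDerivAt_pow 2 x).const_mul (-a)).exp).congr_deriv ?_
  simp only [gaussMul, gaussDerivative, eval_sub, eval_mul, eval_C, eval_X]
  push_cast
  ring

theorem deriv_gaussMul : deriv (gaussMul a p) = gaussMul a (gaussDerivative a p) :=
  funext fun x => (hasDerivAt_gaussMul a p x).deriv

theorem gaussMul_eq_sum :
    gaussMul a p =
      fun x => ∑ i ∈ Finset.range (p.natDegree + 1),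
        p.coeff i * (x ^ i * exp (-a * x ^ 2)) := by
  funext x
  simp only [gaussMul, eval_eq_sum_range, Finset.sum_mul, mul_assoc]

theorem gaussMul_neg (x : ℝ) : gaussMul a p (-x) = gaussMul a (p.comp (-X)) x := by
  simp [gaussMul]

variable {a}

theorem integrable_gaussMul (ha : 0 < a) : Integrable (gaussMul a p) := by
  rw [gaussMul_eq_sum]
  refine integrable_finsetSum _ fun i _ => Integrable.const_mul ?_ _
  simpa [rpow_natCast] using
    integrable_rpow_mul_exp_neg_mul_sq ha (s := i) (neg_one_lt_zero.trans_le i.cast_nonneg)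

theorem tendsto_gaussMul_atTop (ha : 0 < a) : Tendsto (gaussMul a p) atTop (𝓝 0) := by
  have hexp : Tendsto (fun x : ℝ => exp (-(1 / 2) * x)) atTop (𝓝 0) :=
    tendsto_exp_atBot.comp (tendsto_id.const_mul_atTop_of_neg (by norm_num))
  have hmonomial (i : ℕ) :
      Tendsto (fun x : ℝ => p.coeff i * (x ^ i * exp (-a * x ^ 2))) atTop (𝓝 0) := by
    simpa [rpow_natCast] using
      ((rpow_mul_exp_neg_mul_sq_isLittleO_exp_neg ha i).tendsto_zero_of_tendsto hexp).const_mul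
        (p.coeff i)
  rw [gaussMul_eq_sum]
  simpa using tendsto_finsetSum _ fun i _ => hmonomial i

theorem tendsto_gaussMul_atBot (ha : 0 < a) : Tendsto (gaussMul a p) atBot (𝓝 0) := by
  have h := (tendsto_gaussMul_atTop (p.comp (-X)) ha).comp tendsto_neg_atBot_atTop
  refine h.congr fun x => ?_
  simp [← gaussMul_neg]

theorem integral_gaussMul_gaussDerivative (ha : 0 < a) :
    ∫ x, gaussMul a (gaussDerivative a p) x = 0 := by
  rw [integral_of_hasDerivAt_of_tendsto (hasDerivAt_gaussMul a p)
    (integrable_gaussMul _ ha) (tendsto_gaussMul_atBot p ha) (tendsto_gaussMul_atTop p ha)]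
  simp

end GaussMul

/-- Second-order correction for the Ulam map. -/
theorem second_order_correction_Ulam :
    (∀ y : ℝ, 0 = deriv (fun z => z * β z) y + (1 / 4) * deriv (deriv β) y +
        Real.sqrt (2 / π) * ((64 / 3) * y ^ 6 - 68 * y ^ 4 + 46 * y ^ 2 - 15 / 4) *
          Real.exp (-2 * y ^ 2)) ∧
    ∫ y : ℝ, β y = 0 := by
  set P : ℝ[X] := C (Real.sqrt (2 / π)) *
    (C (32 / 9) * X ^ 6 - C (31 / 3) * X ^ 4 + C (15 / 2) * X ^ 2 - C (37 / 48))
  set Q : ℝ[X] := C (Real.sqrt (2 / π)) *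
    (C (-8 / 9) * X ^ 5 + C (53 / 36) * X ^ 3 - C (37 / 48) * X)
  have hβP : β = gaussMul 2 P := by
    funext y
    simp [β, gaussMul, P, mul_assoc]
  have hyβ : (fun z => z * β z) = gaussMul 2 (X * P) := by
    funext y
    simp [hβP, gaussMul, mul_assoc]
  have hβQ : β = gaussMul 2 (gaussDerivative 2 Q) := by
    funext y
    simp only [β, gaussMul, gaussDerivative, Q, derivative_mul, derivative_sub, derivative_add,
      derivative_C, derivative_X, derivative_X_pow, eval_sub,
      eval_add, eval_mul, eval_C, eval_X, eval_pow, eval_one, eval_zero]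
    ring
  refine ⟨fun y => ?_, hβQ ▸ integral_gaussMul_gaussDerivative Q two_pos⟩
  rw [hyβ, hβP, deriv_gaussMul, deriv_gaussMul, deriv_gaussMul]
  simp only [gaussMul, gaussDerivative, P, derivative_mul, derivative_sub, derivative_add,
    derivative_C, derivative_zero, derivative_X, derivative_X_pow, eval_sub, eval_add,
    eval_mul, eval_C, eval_X, eval_pow, eval_one, eval_zero]
  ring
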